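/- Let P ↣ N ↠ M be a short exact sequence of R-modules where N is (n,d)-coherent, M is finitely n-presented, and P has projective dimension at most d-1. Then P is (n,d)-coherent. -/

import Mathlib

/-!
Write `n = m + 1`. The kernel `P` is finitely `m`-presented: if `R^k ↠ M` has finitely
`m`-presented kernel `K`, lifting it to `R^k → N` gives a short exact sequence
`K ↣ P × R^k ↠ N` (Schanuel), and finite `m`-presentation passes to extensions (horseshoe
lemma) and to direct summands. Then `P` and each submodule `Q` of `P` as in the definition
embed in `N` as finitely `m`-presented submodules of projective dimension at most `d - 1`,
which the coherence of `N` makes finitely `n`-presented.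
-/

universe u

/-- `M` is a finitely `n`-presented `R`-module. -/
def FinNPres (R : Type u) [Ring R] : ℕ → (M : Type u) → [AddCommGroup M] → [Module R M] → Prop
  | 0, M, _, _ => Module.Finite R M
  | n+1, M, _, _ => ∃ (k : ℕ) (f : (Fin k → R) →ₗ[R] M), Function.Surjective f ∧
      FinNPres R n (LinearMap.ker f)

/-- `M` has projective dimension at most `d` (finite `d`). -/
def ProjDimLE (R : Type u) [Ring R] : ℕ → (M : Type u) → [AddCommGroup M] → [Module R M] → Prop
  | 0, M, _, _ => Module.Projective R M
  | d+1, M, _, _ => ∃ (ι : Type u) (f : (ι →₀ R) →ₗ[R] M), Function.Surjective f ∧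
      ProjDimLE R d (LinearMap.ker f)

/-- Projective dimension at most `d` for `d : ℕ∞`; `d = ⊤` imposes no condition. -/
def ProjDimLE' (R : Type u) [Ring R] (d : ℕ∞) (M : Type u) [AddCommGroup M] [Module R M] : Prop :=
  ∀ k : ℕ, (k : ℕ∞) = d → ProjDimLE R k M

/-- `M` is an `(n,d)`-coherent `R`-module: it is finitely `n`-presented and every finitely
`(n-1)`-presented submodule of `M` of projective dimension at most `d-1` is finitely
`n`-presented. -/
def NDCohMod (R : Type u) [Ring R] (n : ℕ) (d : ℕ∞) (M : Type u)
    [AddCommGroup M] [Module R M] : Prop :=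
  FinNPres R n M ∧ ∀ (N : Submodule R M), FinNPres R (n - 1) N →
    ProjDimLE' R (d - 1) N → FinNPres R n N

open Function
open LinearMap (ker)

section ShortExact

variable {R : Type*} [Ring R] {A B C : Type*} [AddCommGroup A] [Module R A]
  [AddCommGroup B] [Module R B] [AddCommGroup C] [Module R C]

structure IsShortExact (i : A →ₗ[R] B) (p : B →ₗ[R] C) : Prop where
  injective : Injective i
  exact : Exact i p
  surjective : Surjective p

theorem isShortExact_inr_fst : IsShortExact (LinearMap.inr R A B) (LinearMap.fst R A B) :=
  ⟨LinearMap.inr_injective, Exact.inr_fst, LinearMap.fst_surjective⟩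

noncomputable def IsShortExact.linearEquivKer {i : A →ₗ[R] B} {p : B →ₗ[R] C}
    (h : IsShortExact i p) : A ≃ₗ[R] ker p :=
  (LinearEquiv.ofInjective i h.injective).trans
    (LinearEquiv.ofEq _ _ h.exact.linearMap_ker_eq.symm)

variable {F : Type*} [AddCommGroup F] [Module R F]

theorem isShortExact_ker_comap {π : F →ₗ[R] B} (hπ : Surjective π) (S : Submodule R B) :
    IsShortExact (Submodule.inclusion (Submodule.comap_mono bot_le : ker π ≤ S.comap π))
      (π.submoduleComap S) := by
  refine ⟨Submodule.inclusion_injective _, fun x => ⟨fun hx => ?_, ?_⟩, fun y => ?_⟩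
  · exact ⟨⟨x, congrArg Subtype.val hx⟩, rfl⟩
  · rintro ⟨z, rfl⟩
    exact Subtype.ext z.2
  · obtain ⟨x, hx⟩ := hπ y
    exact ⟨⟨x, show π x ∈ S from hx ▸ y.2⟩, Subtype.ext hx⟩

theorem IsShortExact.exists_isShortExact_ker_coprod {i : A →ₗ[R] B} {p : B →ₗ[R] C}
    (hip : IsShortExact i p) {Fa Fc : Type*} [AddCommGroup Fa] [Module R Fa] [AddCommGroup Fc]
    [Module R Fc] {πa : Fa →ₗ[R] A} (hπa : Surjective πa) (h : Fc →ₗ[R] B) :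
    ∃ (ι : ker πa →ₗ[R] ker ((i ∘ₗ πa).coprod h))
      (ψ : ker ((i ∘ₗ πa).coprod h) →ₗ[R] ker (p ∘ₗ h)), IsShortExact ι ψ := by
  have hι : ∀ x ∈ ker πa, LinearMap.inl R Fa Fc x ∈ ker ((i ∘ₗ πa).coprod h) :=
    fun x hx => by simp_all
  have hψ : ∀ y ∈ ker ((i ∘ₗ πa).coprod h), LinearMap.snd R Fa Fc y ∈ ker (p ∘ₗ h) := by
    intro y hy
    have hy' : h y.2 = -i (πa y.1) := eq_neg_of_add_eq_zero_right hy
    simp [hy', hip.exact.apply_apply_eq_zero]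
  refine ⟨(LinearMap.inl R Fa Fc).restrict hι, (LinearMap.snd R Fa Fc).restrict hψ,
    fun x y hxy => Subtype.ext (LinearMap.inl_injective (congrArg Subtype.val hxy)),
    fun z => ⟨fun hz => ?_, ?_⟩, fun y => ?_⟩
  · have hz2 : z.1.2 = 0 := congrArg Subtype.val hz
    have hz1 : πa z.1.1 = 0 := by
      have := z.2
      simp only [LinearMap.mem_ker, LinearMap.coprod_apply, hz2, map_zero, add_zero,
        LinearMap.comp_apply] at this
      exact hip.injective (by rw [this, map_zero])
    exact ⟨⟨z.1.1, hz1⟩, Subtype.ext (Prod.ext rfl hz2.symm)⟩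
  · rintro ⟨x, rfl⟩
    rfl
  · obtain ⟨a, ha⟩ := (hip.exact (h y)).mp y.2
    obtain ⟨x, rfl⟩ := hπa a
    refine ⟨⟨(-x, y), ?_⟩, rfl⟩
    simp [ha]

theorem IsShortExact.surjective_coprod {i : A →ₗ[R] B} {p : B →ₗ[R] C}
    (hip : IsShortExact i p) {Fa Fc : Type*} [AddCommGroup Fa] [Module R Fa] [AddCommGroup Fc]
    [Module R Fc] {πa : Fa →ₗ[R] A} (hπa : Surjective πa) {h : Fc →ₗ[R] B}
    (hph : Surjective (p ∘ₗ h)) : Surjective ((i ∘ₗ πa).coprod h) := by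
  intro b
  obtain ⟨y, hy⟩ := hph (p b)
  obtain ⟨a, ha⟩ := (hip.exact (b - h y)).mp (by simpa [sub_eq_zero] using hy.symm)
  obtain ⟨x, rfl⟩ := hπa a
  exact ⟨(x, y), by simp [ha]⟩

theorem exists_isShortExact_ker_comp_prod {p : B →ₗ[R] C} (h : F →ₗ[R] B)
    (hph : Surjective (p ∘ₗ h)) :
    ∃ (ι : ker (p ∘ₗ h) →ₗ[R] ker p × F) (ψ : ker p × F →ₗ[R] B), IsShortExact ι ψ := by
  refine ⟨(-h.submoduleComap (ker p)).prod (ker (p ∘ₗ h)).subtype, (ker p).subtype.coprod h,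
    fun x y hxy => Subtype.ext (congrArg Prod.snd hxy), fun z => ⟨fun hz => ?_, ?_⟩, fun b => ?_⟩
  · have hz : z.1.1 = -h z.2 := eq_neg_of_add_eq_zero_left hz
    have hx : z.2 ∈ ker (p ∘ₗ h) := by simpa [hz] using z.1.2
    exact ⟨⟨z.2, hx⟩, Prod.ext (Subtype.ext hz.symm) rfl⟩
  · rintro ⟨x, rfl⟩
    exact neg_add_cancel (h x)
  · obtain ⟨x, hx⟩ := hph (p b)
    refine ⟨(⟨b - h x, ?_⟩, x), by simp⟩
    simpa [sub_eq_zero] using hx.symm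

end ShortExact

section FinNPres

variable {R : Type u} [Ring R] {n : ℕ} {A B C M M' : Type u} [AddCommGroup A] [Module R A]
  [AddCommGroup B] [Module R B] [AddCommGroup C] [Module R C] [AddCommGroup M] [Module R M]
  [AddCommGroup M'] [Module R M']

theorem FinNPres.of_linearEquiv (e : M ≃ₗ[R] M') (h : FinNPres R n M) : FinNPres R n M' := by
  induction n generalizing M M' with
  | zero =>
    have : Module.Finite R M := h
    exact Module.Finite.equiv e
  | succ n ih =>
    obtain ⟨k, f, hf, hker⟩ := h
    exact ⟨k, e.toLinearMap ∘ₗ f, e.surjective.comp hf, by rwa [LinearEquiv.ker_comp]⟩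

theorem FinNPres.of_succ (h : FinNPres R (n + 1) M) : FinNPres R n M := by
  induction n generalizing M with
  | zero =>
    obtain ⟨k, f, hf, -⟩ := h
    exact Module.Finite.of_surjective f hf
  | succ n ih =>
    obtain ⟨k, f, hf, hker⟩ := h
    exact ⟨k, f, hf, ih hker⟩

theorem finNPres_of_subsingleton [Subsingleton M] : FinNPres R n M := by
  induction n generalizing M with
  | zero =>
    exact Module.Finite.of_surjective (0 : (Fin 0 → R) →ₗ[R] M) fun _ => ⟨0, Subsingleton.elim _ _⟩
  | succ n ih => exact ⟨0, 0, fun _ => ⟨0, Subsingleton.elim _ _⟩, ih⟩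

theorem finNPres_pi (n k : ℕ) : FinNPres R n (Fin k → R) := by
  cases n with
  | zero => exact Module.Finite.pi
  | succ n =>
    refine ⟨k, LinearMap.id, surjective_id, ?_⟩
    rw [LinearMap.ker_id]
    exact finNPres_of_subsingleton

theorem FinNPres.succ_of_surjective {k : ℕ} {F : Type u} [AddCommGroup F] [Module R F]
    (E : (Fin k → R) ≃ₗ[R] F) {q : F →ₗ[R] M} (hq : Surjective q)
    (hker : FinNPres R n (ker q)) : FinNPres R (n + 1) M :=
  ⟨k, q ∘ₗ E, hq.comp E.surjective, hker.of_linearEquiv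
    (E.ofSubmodules _ _ (Submodule.map_comap_eq_of_surjective E.surjective _)).symm⟩

variable {i : A →ₗ[R] B} {p : B →ₗ[R] C}

theorem IsShortExact.finNPres_middle (hip : IsShortExact i p) (hA : FinNPres R n A)
    (hC : FinNPres R n C) : FinNPres R n B := by
  induction n generalizing A B C with
  | zero =>
    have : Module.Finite R A := hA
    have : Module.Finite R C := hC
    exact Module.Finite.of_exact hip.exact hip.surjective
  | succ n ih =>
    obtain ⟨ka, πa, hπa, hA⟩ := hA
    obtain ⟨kc, πc, hπc, hC⟩ := hC
    obtain ⟨h, rfl⟩ := Module.projective_lifting_property p πc hip.surjective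
    obtain ⟨ι, ψ, hιψ⟩ := hip.exists_isShortExact_ker_coprod hπa h
    exact .succ_of_surjective ((LinearEquiv.funCongrLeft R R finSumFinEquiv).trans
        (LinearEquiv.sumArrowLequivProdArrow _ _ R R))
      (hip.surjective_coprod hπa hπc) (ih hιψ hA hC)

theorem IsShortExact.finNPres_right (hip : IsShortExact i p) (hA : FinNPres R n A)
    (hB : FinNPres R n B) : FinNPres R n C := by
  cases n with
  | zero =>
    have : Module.Finite R B := hB
    exact Module.Finite.of_surjective p hip.surjective
  | succ n =>
    obtain ⟨k, π, hπ, hK⟩ := hB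
    exact ⟨k, p ∘ₗ π, hip.surjective.comp hπ, (isShortExact_ker_comap hπ _).finNPres_middle hK
      (hA.of_succ.of_linearEquiv hip.linearEquivKer)⟩

theorem IsShortExact.finNPres_left (hip : IsShortExact i p) (hB : FinNPres R n B)
    (hC : FinNPres R (n + 1) C) : FinNPres R n A := by
  obtain ⟨k, π, hπ, hK⟩ := hC
  obtain ⟨h, rfl⟩ := Module.projective_lifting_property p π hip.surjective
  obtain ⟨ι, ψ, hιψ⟩ := exists_isShortExact_ker_comp_prod h hπ
  have hprod : FinNPres R n (ker p × (Fin k → R)) := hιψ.finNPres_middle hK hB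
  exact (isShortExact_inr_fst.finNPres_right (finNPres_pi n k) hprod).of_linearEquiv
    hip.linearEquivKer.symm

end FinNPres

section ProjDim

variable {R : Type u} [Ring R] {M M' : Type u} [AddCommGroup M] [Module R M]
  [AddCommGroup M'] [Module R M']

theorem ProjDimLE.of_linearEquiv {d : ℕ} (e : M ≃ₗ[R] M') (h : ProjDimLE R d M) :
    ProjDimLE R d M' := by
  induction d generalizing M M' with
  | zero =>
    have : Module.Projective R M := h
    exact Module.Projective.of_equiv e
  | succ d ih =>
    obtain ⟨ι, f, hf, hker⟩ := h
    exact ⟨ι, e.toLinearMap ∘ₗ f, e.surjective.comp hf, by rwa [LinearEquiv.ker_comp]⟩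

theorem ProjDimLE'.of_linearEquiv {d : ℕ∞} (e : M ≃ₗ[R] M') (h : ProjDimLE' R d M) :
    ProjDimLE' R d M' :=
  fun k hk => (h k hk).of_linearEquiv e

end ProjDim

theorem NDCohMod.finNPres_of_injective {R : Type u} [Ring R] {n : ℕ} {d : ℕ∞} {N P : Type u}
    [AddCommGroup N] [Module R N] [AddCommGroup P] [Module R P] (hN : NDCohMod R n d N)
    {f : P →ₗ[R] N} (hf : Injective f) (hP : FinNPres R (n - 1) P)
    (hPd : ProjDimLE' R (d - 1) P) : FinNPres R n P :=
  let e := LinearEquiv.ofInjective f hf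
  (hN.2 _ (hP.of_linearEquiv e) (hPd.of_linearEquiv e)).of_linearEquiv e.symm

theorem ndCohMod_kernel_general (R : Type u) [Ring R] (n : ℕ) (hn : 1 ≤ n) (d : ℕ∞)
    (P N M : Type u) [AddCommGroup P] [Module R P] [AddCommGroup N] [Module R N]
    [AddCommGroup M] [Module R M] (f : P →ₗ[R] N) (g : N →ₗ[R] M)
    (hf : Function.Injective f) (hg : Function.Surjective g)
    (hex : LinearMap.range f = LinearMap.ker g)
    (hN : NDCohMod R n d N) (hM : FinNPres R n M) (hP : ProjDimLE' R (d - 1) P) :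
    NDCohMod R n d P := by
  obtain ⟨m, rfl⟩ : ∃ m, n = m + 1 := ⟨n - 1, by omega⟩
  have hfg : IsShortExact f g := ⟨hf, LinearMap.exact_iff.mpr hex.symm, hg⟩
  have hPm : FinNPres R m P := hfg.finNPres_left hN.1.of_succ hM
  refine ⟨hN.finNPres_of_injective hf hPm hP, fun Q hQ hQd => ?_⟩
  exact hN.finNPres_of_injective (f := f ∘ₗ Q.subtype) (hf.comp Q.injective_subtype) hQ hQd

/-- Let `P ↣ N ↠ M` be a short exact sequence of `R`-modules with `N` an `(n,d)`-coherent
module, `M` finitely `n`-presented, and `pd P ≤ d - 1`.  Then `P` is `(n,d)`-coherent. -/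
theorem ndCohMod_kernel (R : Type u) [Ring R] (n : ℕ) (hn : 1 ≤ n) (d : ℕ∞) (hd : 1 ≤ d)
    (P N M : Type u) [AddCommGroup P] [Module R P] [AddCommGroup N] [Module R N]
    [AddCommGroup M] [Module R M] (f : P →ₗ[R] N) (g : N →ₗ[R] M)
    (hf : Function.Injective f) (hg : Function.Surjective g)
    (hex : LinearMap.range f = LinearMap.ker g)
    (hN : NDCohMod R n d N) (hM : FinNPres R n M) (hP : ProjDimLE' R (d - 1) P) :
    NDCohMod R n d P :=
  ndCohMod_kernel_general R n hn d P N M f g hf hg hex hN hM hP
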